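/- Let f : ℝ → ℝ be a nonnegative probability density (f ≥ 0, ∫ f = 1) supported in the interval (-M, M) for some M > 0, and suppose f ∈ L^p(ℝ) for some p with 1 < p < 2. Then the logarithmic energy ∬ log|s - t| f(s) f(t) ds dt is finite (not -∞); in fact |∬ log|s-t| f(s)f(t) ds dt| ≤ ‖f‖_p · ‖f‖_p · ‖L‖_{q/2}, where L(t) = 1_{(-4M,4M)}(t)·log|t| and 1/p + 1/q = 1. -/

import Mathlib

/-!
Since `f` lives in `(-M, M)`, the kernel `log |s - t|` may be replaced by its truncation
`L(s - t)`, so the energy is the trilinear form `∬ L(s - t) f(s) f(t)`. Young's convolution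
inequality bounds this by `‖f‖_p ‖f‖_p ‖L‖_{q/2}`, because `1/p + 1/p + 2/q = 2`; Young's
inequality in turn is Hölder's inequality for three suitable functions on the product space,
whose integrals factor by translation invariance. Finally `‖L‖_{q/2} < ∞` because
`|log t|^c ≤ C |t|^{-1/2}` near `0`.
-/

open MeasureTheory Set Real
open scoped ENNReal

theorem ENNReal.mul_rpow_mul_mul_rpow_mul_mul_rpow (u v w : ℝ≥0∞) {α β γ : ℝ}
    (hα : 0 ≤ α) (hβ : 0 ≤ β) (hγ : 0 ≤ γ) :
    (u * w) ^ α * (v * w) ^ β * (u * v) ^ γ = u ^ (α + γ) * v ^ (β + γ) * w ^ (α + β) := by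
  rw [ENNReal.mul_rpow_of_nonneg _ _ hα, ENNReal.mul_rpow_of_nonneg _ _ hβ,
    ENNReal.mul_rpow_of_nonneg _ _ hγ, ENNReal.rpow_add_of_nonneg _ _ hα hγ,
    ENNReal.rpow_add_of_nonneg _ _ hβ hγ, ENNReal.rpow_add_of_nonneg _ _ hα hβ]
  ring

theorem ENNReal.lintegral_rpow_mul_rpow_mul_rpow_le {α : Type*} [MeasurableSpace α]
    {μ : Measure α} {f g h : α → ℝ≥0∞} (hf : AEMeasurable f μ) (hg : AEMeasurable g μ)
    (hh : AEMeasurable h μ) {a b c : ℝ} (ha : 0 ≤ a) (hb : 0 ≤ b) (hc : 0 ≤ c)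
    (habc : a + b + c = 1) :
    ∫⁻ x, f x ^ a * g x ^ b * h x ^ c ∂μ ≤
      (∫⁻ x, f x ∂μ) ^ a * (∫⁻ x, g x ∂μ) ^ b * (∫⁻ x, h x ∂μ) ^ c := by
  simpa [Fin.prod_univ_three, mul_assoc] using
    ENNReal.lintegral_prod_norm_pow_le (μ := μ) Finset.univ (f := ![f, g, h])
      (p := ![a, b, c]) (by simp [Fin.forall_fin_succ, hf, hg, hh])
      (by simp [Fin.sum_univ_three, habc]) (by simp [Fin.forall_fin_succ, ha, hb, hc])

theorem abs_log_rpow_le_mul_rpow_neg_half_add {c x A : ℝ} (hc : 0 < c) (hx : 0 < x)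
    (hxA : x ≤ A) : |log x| ^ c ≤ (2 * c) ^ c * x ^ (-(1 / 2) : ℝ) + |log A| ^ c := by
  rcases le_total x 1 with hx1 | hx1
  · have hlog : |log x| ≤ x ^ (-(1 / (2 * c))) * (2 * c) := by
      have := abs_log_mul_self_rpow_lt x (1 / (2 * c)) hx hx1 (by positivity)
      rw [abs_mul, abs_of_pos (rpow_pos_of_pos hx _)] at this
      rw [rpow_neg hx.le, ← div_eq_inv_mul, le_div_iff₀ (rpow_pos_of_pos hx _)]
      simpa [div_div] using this.le
    calc |log x| ^ c ≤ (x ^ (-(1 / (2 * c))) * (2 * c)) ^ c := by gcongr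
      _ = (2 * c) ^ c * x ^ (-(1 / 2) : ℝ) := by
        rw [mul_rpow (by positivity) (by positivity), ← rpow_mul hx.le, mul_comm]
        congr 2
        field_simp
      _ ≤ _ := le_add_of_nonneg_right (by positivity)
  · have : |log x| ≤ |log A| := by
      rw [abs_of_nonneg (log_nonneg hx1), abs_of_nonneg (log_nonneg (hx1.trans hxA))]
      exact log_le_log hx hxA
    exact (rpow_le_rpow (abs_nonneg _) this hc.le).trans (le_add_of_nonneg_left (by positivity))

theorem intervalIntegrable_abs_log_rpow {c : ℝ} (hc : 0 < c) (a b : ℝ) :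
    IntervalIntegrable (fun x => |log x| ^ c) volume a b := by
  refine intervalIntegrable_of_even (fun x => by rw [log_neg_eq_log]) (fun A hA => ?_)
  refine IntervalIntegrable.mono_fun
    (((intervalIntegral.intervalIntegrable_rpow' (by norm_num : (-1 : ℝ) < -(1 / 2))).const_mul
      ((2 * c) ^ c)).add (intervalIntegrable_const (c := |log A| ^ c)))
    (measurable_log.abs.pow_const c).aestronglyMeasurable ?_
  rw [uIoc_of_le hA.le]
  filter_upwards [ae_restrict_mem measurableSet_Ioc] with x hx
  rw [norm_of_nonneg (by positivity),
    norm_of_nonneg (by have := rpow_nonneg hx.1.le (-(1 / 2)); positivity)]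
  exact abs_log_rpow_le_mul_rpow_neg_half_add hc hx.1 hx.2

theorem memLp_indicator_Ioo_log_abs {c : ℝ} (hc : 0 < c) (a b : ℝ) :
    MemLp ((Ioo a b).indicator fun t => log |t|) (ENNReal.ofReal c) volume := by
  rw [memLp_indicator_iff_restrict measurableSet_Ioo]
  refine (integrable_norm_rpow_iff measurable_id.abs.log.aestronglyMeasurable
    (by simpa using hc) ENNReal.ofReal_ne_top).1 ?_
  simp only [Real.norm_eq_abs, log_abs, ENNReal.toReal_ofReal hc.le]
  exact (intervalIntegrable_abs_log_rpow hc a b).def'.mono_set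
    (Ioo_subset_Ioc_self.trans Ioc_subset_uIoc)

section Young

variable {G : Type*} [MeasurableSpace G] [AddGroup G] [MeasurableAdd₂ G] [MeasurableNeg G]
  {μ : Measure G} [SFinite μ] {g h : G → ℝ≥0∞}

theorem lintegral_prod_mul_comp_sub_fst [μ.IsAddLeftInvariant] [μ.IsNegInvariant]
    (hg : AEMeasurable g μ) (hh : AEMeasurable h μ) :
    ∫⁻ z, g z.1 * h (z.1 - z.2) ∂μ.prod μ = (∫⁻ x, g x ∂μ) * ∫⁻ x, h x ∂μ := by
  have hmeas : AEMeasurable (fun z : G × G => g z.1 * h (z.1 - z.2)) (μ.prod μ) :=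
    hg.comp_fst.mul (hh.comp_quasiMeasurePreserving (quasiMeasurePreserving_sub μ μ))
  rw [lintegral_prod _ hmeas, ← lintegral_mul_const'' _ hg]
  refine lintegral_congr fun x => ?_
  rw [lintegral_const_mul'' (g x) (f := fun y => h (x - y)) (hh.comp_quasiMeasurePreserving
    (quasiMeasurePreserving_sub_left μ x)), lintegral_sub_left_eq_self]

theorem lintegral_prod_mul_comp_sub_snd [μ.IsAddRightInvariant]
    (hg : AEMeasurable g μ) (hh : AEMeasurable h μ) :
    ∫⁻ z, g z.2 * h (z.1 - z.2) ∂μ.prod μ = (∫⁻ x, g x ∂μ) * ∫⁻ x, h x ∂μ := by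
  have hmeas : AEMeasurable (fun z : G × G => g z.2 * h (z.1 - z.2)) (μ.prod μ) :=
    hg.comp_snd.mul (hh.comp_quasiMeasurePreserving
      (quasiMeasurePreserving_sub_of_right_invariant μ μ))
  rw [lintegral_prod_symm _ hmeas, ← lintegral_mul_const'' _ hg]
  refine lintegral_congr fun y => ?_
  rw [lintegral_const_mul'' (g y) (f := fun x => h (x - y)) (hh.comp_quasiMeasurePreserving
    (measurePreserving_sub_right μ y).quasiMeasurePreserving), lintegral_sub_right_eq_self]

theorem ENNReal.lintegral_comp_sub_mul_mul_le_young [μ.IsAddLeftInvariant]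
    [μ.IsAddRightInvariant] [μ.IsNegInvariant] {g₁ g₂ h : G → ℝ≥0∞}
    (hg₁ : AEMeasurable g₁ μ) (hg₂ : AEMeasurable g₂ μ) (hh : AEMeasurable h μ)
    {a b c : ℝ} (ha : 1 ≤ a) (hb : 1 ≤ b) (hc : 1 ≤ c) (habc : 1 / a + 1 / b + 1 / c = 2) :
    ∫⁻ z, h (z.1 - z.2) * g₁ z.1 * g₂ z.2 ∂μ.prod μ ≤
      (∫⁻ x, g₁ x ^ a ∂μ) ^ (1 / a) * (∫⁻ x, g₂ x ^ b ∂μ) ^ (1 / b) *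
        (∫⁻ x, h x ^ c ∂μ) ^ (1 / c) := by
  have hθ : ∀ {r : ℝ}, 1 ≤ r → 0 ≤ 1 - 1 / r := fun hr =>
    sub_nonneg.2 (div_le_one_of_le₀ hr (by linarith))
  have hsub : AEMeasurable (fun z : G × G => h (z.1 - z.2) ^ c) (μ.prod μ) :=
    (hh.pow_const c).comp_quasiMeasurePreserving (quasiMeasurePreserving_sub μ μ)
  set A := ∫⁻ x, g₁ x ^ a ∂μ
  set B := ∫⁻ x, g₂ x ^ b ∂μ
  set K := ∫⁻ x, h x ^ c ∂μ
  -- Hölder with exponents `1 - 1/b`, `1 - 1/a`, `1 - 1/c`, which sum to `1`.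
  calc ∫⁻ z, h (z.1 - z.2) * g₁ z.1 * g₂ z.2 ∂μ.prod μ
      = ∫⁻ z, (g₁ z.1 ^ a * h (z.1 - z.2) ^ c) ^ (1 - 1 / b) *
          (g₂ z.2 ^ b * h (z.1 - z.2) ^ c) ^ (1 - 1 / a) *
          (g₁ z.1 ^ a * g₂ z.2 ^ b) ^ (1 - 1 / c) ∂μ.prod μ := by
        refine lintegral_congr fun z => ?_
        have ea : 1 - 1 / b + (1 - 1 / c) = a⁻¹ := by rw [← one_div]; linarith
        have eb : 1 - 1 / a + (1 - 1 / c) = b⁻¹ := by rw [← one_div]; linarith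
        have ec : 1 - 1 / b + (1 - 1 / a) = c⁻¹ := by rw [← one_div]; linarith
        rw [ENNReal.mul_rpow_mul_mul_rpow_mul_mul_rpow _ _ _ (hθ hb) (hθ ha) (hθ hc), ea, eb, ec,
          ENNReal.rpow_rpow_inv (by linarith), ENNReal.rpow_rpow_inv (by linarith),
          ENNReal.rpow_rpow_inv (by linarith)]
        ring
    _ ≤ (A * K) ^ (1 - 1 / b) * (B * K) ^ (1 - 1 / a) * (A * B) ^ (1 - 1 / c) := by
        rw [← lintegral_prod_mul_comp_sub_fst (hg₁.pow_const a) (hh.pow_const c),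
          ← lintegral_prod_mul_comp_sub_snd (hg₂.pow_const b) (hh.pow_const c),
          ← lintegral_prod_mul (hg₁.pow_const a) (hg₂.pow_const b)]
        exact ENNReal.lintegral_rpow_mul_rpow_mul_rpow_le
          ((hg₁.pow_const a).comp_fst.mul hsub) ((hg₂.pow_const b).comp_snd.mul hsub)
          ((hg₁.pow_const a).comp_fst.mul (hg₂.pow_const b).comp_snd) (hθ hb) (hθ ha) (hθ hc)
          (by linarith)
    _ = A ^ (1 / a) * B ^ (1 / b) * K ^ (1 / c) := by
        rw [ENNReal.mul_rpow_mul_mul_rpow_mul_mul_rpow _ _ _ (hθ hb) (hθ ha) (hθ hc)]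
        congr 3 <;> linarith

theorem lintegral_enorm_comp_sub_mul_mul_le_eLpNorm {E F : Type*}
    [μ.IsAddLeftInvariant] [μ.IsAddRightInvariant] [μ.IsNegInvariant] [NormedAddCommGroup E] [NormedAddCommGroup F] {f₁ f₂ : G → E} {k : G → F}
    (hf₁ : AEStronglyMeasurable f₁ μ) (hf₂ : AEStronglyMeasurable f₂ μ)
    (hk : AEStronglyMeasurable k μ)
    {a b c : ℝ} (ha : 1 ≤ a) (hb : 1 ≤ b) (hc : 1 ≤ c) (habc : 1 / a + 1 / b + 1 / c = 2) :
    ∫⁻ z, ‖k (z.1 - z.2)‖ₑ * ‖f₁ z.1‖ₑ * ‖f₂ z.2‖ₑ ∂μ.prod μ ≤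
      eLpNorm f₁ (ENNReal.ofReal a) μ * eLpNorm f₂ (ENNReal.ofReal b) μ *
        eLpNorm k (ENNReal.ofReal c) μ := by
  rw [eLpNorm_eq_lintegral_rpow_enorm_toReal (by simp; linarith) ENNReal.ofReal_ne_top,
    eLpNorm_eq_lintegral_rpow_enorm_toReal (by simp; linarith) ENNReal.ofReal_ne_top,
    eLpNorm_eq_lintegral_rpow_enorm_toReal (by simp; linarith) ENNReal.ofReal_ne_top,
    ENNReal.toReal_ofReal (by linarith), ENNReal.toReal_ofReal (by linarith),
    ENNReal.toReal_ofReal (by linarith)]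
  exact ENNReal.lintegral_comp_sub_mul_mul_le_young hf₁.enorm hf₂.enorm hk.enorm ha hb hc habc

end Young

theorem indicator_log_abs_sub_mul_mul_eq {M R : ℝ} (hR : 2 * M ≤ R) {f : ℝ → ℝ}
    (hf : ∀ x, x ∉ Ioo (-M) M → f x = 0) (s t : ℝ) :
    (Ioo (-R) R).indicator (fun u => log |u|) (s - t) * f s * f t = log |s - t| * f s * f t := by
  by_cases hs : s ∈ Ioo (-M) M
  · by_cases ht : t ∈ Ioo (-M) M
    · rw [indicator_of_mem (show s - t ∈ Ioo (-R) R from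
        ⟨by linarith [hs.1, ht.2], by linarith [hs.2, ht.1]⟩)]
    · simp [hf t ht]
  · simp [hf s hs]

theorem log_energy_finite_of_Lp_density_general
    (M : ℝ) (hM : 0 < M) (f : ℝ → ℝ)
    (hf_supp : ∀ x, x ∉ Set.Ioo (-M) M → f x = 0)
    (p q : ℝ) (hp : 1 < p) (hp2 : p < 2) (hpq : 1/p + 1/q = 1)
    (hf_Lp : MemLp f (ENNReal.ofReal p) (volume : Measure ℝ))
    (L : ℝ → ℝ)
    (hL : L = Set.indicator (Set.Ioo (-(4*M)) (4*M)) (fun t : ℝ => Real.log |t|)) :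
    Integrable (fun z : ℝ × ℝ => Real.log |z.1 - z.2| * f z.1 * f z.2)
      ((volume : Measure ℝ).prod volume) ∧
    |∫ z : ℝ × ℝ, Real.log |z.1 - z.2| * f z.1 * f z.2
        ∂((volume : Measure ℝ).prod volume)| ≤
      (eLpNorm f (ENNReal.ofReal p) volume).toReal *
      (eLpNorm f (ENNReal.ofReal p) volume).toReal *
      (eLpNorm L (ENNReal.ofReal (q/2)) volume).toReal := by
  have hq : 2 < q := by
    have hq0 : 0 < q := one_div_pos.mp (by linarith [(div_lt_one (by linarith)).2 hp])
    refine (one_div_lt_one_div hq0 two_pos).mp ?_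
    linarith [one_div_lt_one_div_of_lt (by linarith : (0 : ℝ) < p) hp2]
  have hexp : 1 / p + 1 / p + 1 / (q / 2) = 2 := by
    rw [one_div_div]; linarith [show 2 / q = 2 * (1 / q) by ring]
  have hL_Lp : MemLp L (ENNReal.ofReal (q / 2)) volume :=
    hL ▸ memLp_indicator_Ioo_log_abs (by linarith) _ _
  have hpointwise : ∀ z : ℝ × ℝ, ‖Real.log |z.1 - z.2| * f z.1 * f z.2‖ₑ =
      ‖L (z.1 - z.2)‖ₑ * ‖f z.1‖ₑ * ‖f z.2‖ₑ := fun z => by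
    rw [hL, ← enorm_mul, ← enorm_mul, indicator_log_abs_sub_mul_mul_eq (by linarith) hf_supp]
  have hbound := lintegral_enorm_comp_sub_mul_mul_le_eLpNorm (μ := volume) hf_Lp.1 hf_Lp.1
    hL_Lp.1 hp.le hp.le (by linarith : 1 ≤ q / 2) hexp
  simp only [← hpointwise] at hbound
  have hfinite := ENNReal.mul_ne_top (ENNReal.mul_ne_top hf_Lp.2.ne hf_Lp.2.ne) hL_Lp.2.ne
  have hmeas : AEStronglyMeasurable (fun z : ℝ × ℝ => Real.log |z.1 - z.2| * f z.1 * f z.2)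
      ((volume : Measure ℝ).prod volume) :=
    ((measurable_fst.sub measurable_snd).abs.log.aestronglyMeasurable.mul hf_Lp.1.comp_fst).mul
      hf_Lp.1.comp_snd
  refine ⟨⟨hmeas, hbound.trans_lt hfinite.lt_top⟩, ?_⟩
  rw [← Real.norm_eq_abs, ← ENNReal.toReal_mul, ← ENNReal.toReal_mul, ← toReal_enorm]
  exact ENNReal.toReal_mono hfinite ((enorm_integral_le_lintegral_enorm _).trans hbound)

/-- If `f` is a probability density supported in `(-M, M)` with `f ∈ L^p`, `1 < p < 2`,
then the logarithmic energy `∬ log|s-t| f(s) f(t) ds dt` is finite; in fact its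
absolute value is bounded by `‖f‖_p · ‖f‖_p · ‖L‖_{q/2}` where
`L = 1_{(-4M,4M)} · log|·|` and `1/p + 1/q = 1`. -/
theorem log_energy_finite_of_Lp_density
    (M : ℝ) (hM : 0 < M) (f : ℝ → ℝ)
    (hf_nonneg : ∀ x, 0 ≤ f x)
    (hf_int : Integrable f)
    (hf_prob : ∫ x, f x = 1)
    (hf_supp : ∀ x, x ∉ Set.Ioo (-M) M → f x = 0)
    (p q : ℝ) (hp : 1 < p) (hp2 : p < 2) (hpq : 1/p + 1/q = 1)
    (hf_Lp : MemLp f (ENNReal.ofReal p) (volume : Measure ℝ))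
    (L : ℝ → ℝ)
    (hL : L = Set.indicator (Set.Ioo (-(4*M)) (4*M)) (fun t : ℝ => Real.log |t|)) :
    Integrable (fun z : ℝ × ℝ => Real.log |z.1 - z.2| * f z.1 * f z.2)
      ((volume : Measure ℝ).prod volume) ∧
    |∫ z : ℝ × ℝ, Real.log |z.1 - z.2| * f z.1 * f z.2
        ∂((volume : Measure ℝ).prod volume)| ≤
      (eLpNorm f (ENNReal.ofReal p) volume).toReal *
      (eLpNorm f (ENNReal.ofReal p) volume).toReal *
      (eLpNorm L (ENNReal.ofReal (q/2)) volume).toReal :=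
  log_energy_finite_of_Lp_density_general M hM f hf_supp p q hp hp2 hpq hf_Lp L hL
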